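/- Subtyping in LSST is transitive: if A ≤ B and B ≤ C, then A ≤ C, where ≤ is LSST subtyping. -/

import Mathlib

/-! Transitivity is proved by simultaneous structural recursion on the middle type of
`A ≤ B ≤ C` rather than on either derivation: contravariance in arrow domains and sent
types swaps the roles of the two derivations, but always at a strict subterm of the
middle type. -/

/-- Multiplicities. -/
inductive Mult : Type
  | lin
  | un

/-- Subkinding on multiplicities: un ≤ lin, lin ≤ lin, un ≤ un. -/
inductive MSub : Mult → Mult → Prop
  | unLin : MSub .un .lin
  | linLin : MSub .lin .lin
  | unUn : MSub .un .un

mutual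
/-- LSST types: A ::= S | Unit | A →_m B | A × B. -/
inductive Ty : Type
  | session (S : STy) : Ty
  | unit : Ty
  | arrow (m : Mult) (A B : Ty) : Ty
  | prod (A B : Ty) : Ty

/-- LSST session types: S ::= !A.S | ?A.S | ⊕{ℓ:Sℓ} | &{ℓ:Sℓ} | end! | end?.
Branches are given by a finite label set `L` and a branch assignment `f`. -/
inductive STy : Type
  | send (A : Ty) (S : STy) : STy
  | recv (A : Ty) (S : STy) : STy
  | choice (L : Finset String) (f : String → STy) : STy
  | branch (L : Finset String) (f : String → STy) : STy
  | endS : STy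
  | endR : STy
end

mutual
/-- LSST subtyping on types. -/
inductive SubT : Ty → Ty → Prop
  | unit : SubT .unit .unit
  | arrow {A A' B B' m n} : SubT A' A → SubT B B' → MSub m n →
      SubT (.arrow m A B) (.arrow n A' B')
  | prod {A A' B B'} : SubT A A' → SubT B B' →
      SubT (.prod A B) (.prod A' B')
  | session {S S'} : SubS S S' → SubT (.session S) (.session S')

/-- LSST subtyping on session types. -/
inductive SubS : STy → STy → Prop
  | send {A A' S S'} : SubT A' A → SubS S S' → SubS (.send A S) (.send A' S')
  | recv {A A' S S'} : SubT A A' → SubS S S' → SubS (.recv A S) (.recv A' S')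
  | choice {L L' : Finset String} {f f'} : L' ⊆ L →
      (∀ ℓ ∈ L', SubS (f ℓ) (f' ℓ)) → SubS (.choice L f) (.choice L' f')
  | branch {L L' : Finset String} {f f'} : L ⊆ L' →
      (∀ ℓ ∈ L, SubS (f ℓ) (f' ℓ)) → SubS (.branch L f) (.branch L' f')
  | endS : SubS .endS .endS
  | endR : SubS .endR .endR
end

theorem MSub.trans {a b c : Mult} (hab : MSub a b) (hbc : MSub b c) : MSub a c := by
  cases hab <;> cases hbc <;> constructor

mutual
theorem SubT.trans : ∀ (B : Ty) {A C : Ty}, SubT A B → SubT B C → SubT A C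
  | .unit, _, _, .unit, .unit => .unit
  | .arrow _ A B, _, _, .arrow hA hB hm, .arrow hA' hB' hm' =>
      .arrow (SubT.trans A hA' hA) (SubT.trans B hB hB') (hm.trans hm')
  | .prod A B, _, _, .prod hA hB, .prod hA' hB' =>
      .prod (SubT.trans A hA hA') (SubT.trans B hB hB')
  | .session S, _, _, .session h, .session h' => .session (SubS.trans S h h')

theorem SubS.trans : ∀ (T : STy) {S U : STy}, SubS S T → SubS T U → SubS S U
  | .send A T, _, _, .send hA hS, .send hA' hS' =>
      .send (SubT.trans A hA' hA) (SubS.trans T hS hS')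
  | .recv A T, _, _, .recv hA hS, .recv hA' hS' =>
      .recv (SubT.trans A hA hA') (SubS.trans T hS hS')
  | .choice _ f, _, _, .choice hL h, .choice hL' h' =>
      .choice (hL'.trans hL) fun l hl => SubS.trans (f l) (h l (hL' hl)) (h' l hl)
  | .branch _ f, _, _, .branch hL h, .branch hL' h' =>
      .branch (hL.trans hL') fun l hl => SubS.trans (f l) (h l hl) (h' l (hL hl))
  | .endS, _, _, .endS, .endS => .endS
  | .endR, _, _, .endR, .endR => .endR
end

/-- LSST subtyping is transitive: if A ≤ B and B ≤ C then A ≤ C. -/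
theorem subT_trans : ∀ A B C : Ty, SubT A B → SubT B C → SubT A C :=
  fun _ B _ => SubT.trans B
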